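/- Let P(R) be the space of Borel probability measures on R with the topology of weak convergence. The set D of all probability measures on R that belong to the maximum domain of attraction of some extreme value distribution is not an open subset of P(R): for every F in D and every epsilon > 0 there exists G in P(R) with Levy distance d(F,G) < epsilon such that G is not in D. -/

import Mathlib

open MeasureTheory Filter Topology Set NNReal

/-- The cumulative distribution function of a Borel probability measure on `ℝ`:
`F(x) = μ((-∞, x])`. -/
noncomputable def distrib (μ : ProbabilityMeasure ℝ) (x : ℝ) : ℝ :=
  (μ (Set.Iic x) : ℝ≥0)

/-- The generalized extreme value distribution function `G_γ`, with
`G_γ(x) = exp(-(1+γx)^(-1/γ))` where `1 + γx > 0` (interpreted as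
`G_0(x) = exp(-e^(-x))` when `γ = 0`). -/
noncomputable def evCdf (γ : ℝ) (x : ℝ) : ℝ :=
  if γ = 0 then Real.exp (-Real.exp (-x))
  else if 0 < 1 + γ * x then Real.exp (-(1 + γ * x) ^ (-1 / γ))
  else if 0 < γ then 0 else 1

/-- `μ` belongs to the maximum domain of attraction `D(G_γ)`: there are `a n > 0` and `b n`
such that `(F (a n * x + b n)) ^ n → G_γ x` at every continuity point `x` of `G_γ`. -/
def MemDomAttr (γ : ℝ) (μ : ProbabilityMeasure ℝ) : Prop :=
  ∃ a b : ℕ → ℝ, (∀ n, 0 < a n) ∧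
    ∀ x : ℝ, ContinuousAt (evCdf γ) x →
      Tendsto (fun n : ℕ => distrib μ (a n * x + b n) ^ n) atTop (𝓝 (evCdf γ x))

/-- The Lévy distance between two Borel probability measures on `ℝ`. -/
noncomputable def levyDist (μ ν : ProbabilityMeasure ℝ) : ℝ :=
  sInf {ε : ℝ | 0 < ε ∧ ∀ x : ℝ,
    distrib μ (x - ε) - ε ≤ distrib ν x ∧ distrib ν x ≤ distrib μ (x + ε) + ε}

/-!
Truncating a law at a point `t` with `F(t) < 1`, i.e. replacing `X` by `min X t`, produces a
distribution function that jumps from at most `F(t) < 1` straight to `1`. Such a law lies in no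
domain of attraction: `G_γ(0) = e⁻¹` for every `γ`, whereas `F(b_n)^n` is either `1` or at most
`F(t)^n → 0`. Choosing `t` with `F(t + ε) ≥ 1 - ε` makes the truncation `ε`-close in Lévy
distance, and for a law of unbounded support, such as the exponential law (in `D(G_0)`), the
truncations converge weakly as `t → ∞`, so `D` is not open.
-/

open ProbabilityTheory

lemma distrib_eq_cdf (μ : ProbabilityMeasure ℝ) : distrib μ = cdf (μ : Measure ℝ) := by
  ext x
  rw [cdf_eq_real]
  rfl

lemma distrib_nonneg (μ : ProbabilityMeasure ℝ) (x : ℝ) : 0 ≤ distrib μ x :=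
  (distrib_eq_cdf μ).symm ▸ cdf_nonneg _ x

lemma distrib_le_one (μ : ProbabilityMeasure ℝ) (x : ℝ) : distrib μ x ≤ 1 :=
  (distrib_eq_cdf μ).symm ▸ cdf_le_one _ x

lemma distrib_mono (μ : ProbabilityMeasure ℝ) : Monotone (distrib μ) :=
  (distrib_eq_cdf μ).symm ▸ (cdf _).mono

lemma exists_distrib_lt_one_and_le_distrib_add (μ : ProbabilityMeasure ℝ) {ε : ℝ} (hε : 0 < ε) :
    ∃ t, distrib μ t < 1 ∧ 1 - ε ≤ distrib μ (t + ε) := by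
  by_cases hlt : ∀ s, distrib μ s < 1
  · have hlim : Tendsto (distrib μ) atTop (𝓝 1) := (distrib_eq_cdf μ).symm ▸ tendsto_cdf_atTop _
    obtain ⟨s, hs⟩ := (hlim.eventually (eventually_ge_nhds (by linarith : 1 - ε < 1))).exists
    exact ⟨s, hlt s, hs.trans (distrib_mono μ (by linarith))⟩
  push Not at hlt
  have hlim : Tendsto (distrib μ) atBot (𝓝 0) := (distrib_eq_cdf μ).symm ▸ tendsto_cdf_atBot _
  obtain ⟨s₀, hs₀⟩ := (hlim.eventually (eventually_lt_nhds zero_lt_one)).exists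
  set A := {s | 1 ≤ distrib μ s}
  have hbdd : BddBelow A := ⟨s₀, fun s hs => ((distrib_mono μ).reflect_lt (hs₀.trans_le hs)).le⟩
  refine ⟨sInf A - ε / 2, lt_of_not_ge fun hmem => ?_, ?_⟩
  · linarith [csInf_le hbdd hmem]
  · obtain ⟨s, hsA, hs⟩ := exists_lt_of_csInf_lt hlt (show sInf A < sInf A + ε / 2 by linarith)
    have hsA : 1 ≤ distrib μ s := hsA
    linarith [distrib_mono μ (show s ≤ sInf A - ε / 2 + ε by linarith)]

lemma evCdf_zero (γ : ℝ) : evCdf γ 0 = Real.exp (-1) := by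
  by_cases hγ : γ = 0 <;> simp [evCdf, hγ]

lemma continuousAt_evCdf_zero (γ : ℝ) : ContinuousAt (evCdf γ) 0 := by
  by_cases hγ : γ = 0
  · subst hγ
    exact (show evCdf 0 = fun x => Real.exp (-Real.exp (-x)) from funext fun _ => if_pos rfl) ▸
      by fun_prop
  · have hpos : ∀ᶠ x in 𝓝 (0 : ℝ), 0 < 1 + γ * x :=
      (isOpen_lt continuous_const (by fun_prop)).mem_nhds (by simp)
    refine ContinuousAt.congr (f := fun x => Real.exp (-(1 + γ * x) ^ (-1 / γ))) ?_
      (hpos.mono fun x hx => by simp [evCdf, hγ, hx])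
    exact ((ContinuousAt.rpow_const (by fun_prop) (Or.inl (by norm_num))).neg).rexp

theorem not_memDomAttr_of_distrib_gap {ν : ProbabilityMeasure ℝ} {p : ℝ} (hp0 : 0 ≤ p)
    (hp1 : p < 1) (hgap : ∀ y, distrib ν y ≤ p ∨ distrib ν y = 1) (γ : ℝ) :
    ¬ MemDomAttr γ ν := by
  rintro ⟨a, b, -, hconv⟩
  have hlim : Tendsto (fun n : ℕ => distrib ν (b n) ^ n) atTop (𝓝 (Real.exp (-1))) := by
    simpa [evCdf_zero] using hconv 0 (continuousAt_evCdf_zero γ)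
  have hbig : ∀ᶠ n : ℕ in atTop, p ^ n < distrib ν (b n) ^ n :=
    (tendsto_pow_atTop_nhds_zero_of_lt_one hp0 hp1).eventually_lt hlim (Real.exp_pos _)
  have hone : ∀ᶠ n : ℕ in atTop, distrib ν (b n) ^ n = 1 := by
    filter_upwards [hbig] with n hn
    rcases hgap (b n) with hle | heq
    · exact absurd (pow_le_pow_left₀ (distrib_nonneg ν _) hle n) hn.not_ge
    · rw [heq, one_pow]
  have := tendsto_nhds_unique hlim (tendsto_const_nhds.congr' (hone.mono fun _ h => h.symm))
  exact (Real.exp_lt_one_iff.mpr (by norm_num)).ne this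

noncomputable def truncAt (μ : ProbabilityMeasure ℝ) (t : ℝ) : ProbabilityMeasure ℝ :=
  μ.map (f := fun x => min x t) (by fun_prop)

lemma distrib_truncAt (μ : ProbabilityMeasure ℝ) (t y : ℝ) :
    distrib (truncAt μ t) y = if t ≤ y then 1 else distrib μ y := by
  have hpre : (fun x => min x t) ⁻¹' Iic y = if t ≤ y then univ else Iic y := by
    ext x
    split_ifs with hty
    · simpa using Or.inr hty
    · simp [hty]
  rw [distrib_eq_cdf, cdf_eq_real, truncAt, ProbabilityMeasure.toMeasure_map,
    map_measureReal_apply (by fun_prop) measurableSet_Iic, hpre]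
  split_ifs
  · exact probReal_univ
  · rw [distrib_eq_cdf, cdf_eq_real]

lemma not_memDomAttr_truncAt {μ : ProbabilityMeasure ℝ} {t : ℝ} (ht : distrib μ t < 1)
    (γ : ℝ) : ¬ MemDomAttr γ (truncAt μ t) := by
  refine not_memDomAttr_of_distrib_gap (distrib_nonneg μ t) ht (fun y => ?_) γ
  rw [distrib_truncAt]
  split_ifs with hty
  · exact Or.inr rfl
  · exact Or.inl (distrib_mono μ (not_le.mp hty).le)

lemma tendsto_truncAt_atTop (μ : ProbabilityMeasure ℝ) : Tendsto (truncAt μ) atTop (𝓝 μ) := by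
  rw [ProbabilityMeasure.tendsto_iff_forall_integral_tendsto]
  intro f
  simp only [truncAt, ProbabilityMeasure.toMeasure_map]
  have hmap : ∀ t, ∫ x, f x ∂((μ : Measure ℝ).map fun x => min x t) = ∫ x, f (min x t) ∂μ :=
    fun t => integral_map (by fun_prop) (by fun_prop)
  simp only [hmap]
  refine tendsto_integral_filter_of_dominated_convergence (fun _ => ‖f‖)
    (Eventually.of_forall fun t => by fun_prop)
    (Eventually.of_forall fun t => ae_of_all _ fun x => f.norm_coe_le_norm _)
    (integrable_const _) (ae_of_all _ fun x => tendsto_const_nhds.congr' ?_)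
  filter_upwards [eventually_ge_atTop x] with t ht
  rw [min_eq_left ht]

lemma distrib_le_distrib_truncAt (μ : ProbabilityMeasure ℝ) (t x : ℝ) :
    distrib μ x ≤ distrib (truncAt μ t) x := by
  rw [distrib_truncAt]
  split_ifs
  exacts [distrib_le_one μ x, le_rfl]

lemma levyDist_truncAt_le (μ : ProbabilityMeasure ℝ) {t ε : ℝ} (hε : 0 < ε)
    (ht : 1 - ε ≤ distrib μ (t + ε)) : levyDist μ (truncAt μ t) ≤ ε := by
  refine csInf_le ⟨0, fun _ h => h.1.le⟩ ⟨hε, fun x => ⟨?_, ?_⟩⟩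
  · linarith [distrib_mono μ (show x - ε ≤ x by linarith), distrib_le_distrib_truncAt μ t x]
  · rw [distrib_truncAt]
    split_ifs with htx
    · linarith [distrib_mono μ (show t + ε ≤ x + ε by linarith)]
    · linarith [distrib_mono μ (show x ≤ x + ε by linarith)]

noncomputable def expLaw : ProbabilityMeasure ℝ :=
  ⟨expMeasure 1, isProbabilityMeasure_expMeasure one_pos⟩

lemma distrib_expLaw (x : ℝ) : distrib expLaw x = if 0 ≤ x then 1 - Real.exp (-x) else 0 := by
  rw [distrib_eq_cdf]
  exact (cdf_expMeasure_eq one_pos x).trans (by simp)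

lemma distrib_expLaw_lt_one (t : ℝ) : distrib expLaw t < 1 := by
  rw [distrib_expLaw]
  split_ifs
  exacts [sub_lt_self 1 (Real.exp_pos _), zero_lt_one]

lemma memDomAttr_expLaw : MemDomAttr 0 expLaw := by
  refine ⟨fun _ => 1, fun n => Real.log n, fun _ => one_pos, fun x _ => ?_⟩
  simp only [evCdf, if_true, one_mul]
  refine (Real.tendsto_one_add_div_pow_exp (-Real.exp (-x))).congr' ?_
  filter_upwards [eventually_ge_atTop ⌈Real.exp (-x)⌉₊] with n hn
  have hn : Real.exp (-x) ≤ n := (Nat.le_ceil _).trans (Nat.cast_le.mpr hn)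
  have hn0 : (0 : ℝ) < n := (Real.exp_pos _).trans_le hn
  have hlog : -x ≤ Real.log n := by simpa using Real.log_le_log (Real.exp_pos _) hn
  rw [distrib_expLaw, if_pos (by linarith), neg_add, Real.exp_add, Real.exp_neg (Real.log n),
    Real.exp_log hn0, neg_div, ← sub_eq_add_neg, div_eq_mul_inv]

/-- The set `D` of distributions on `ℝ` in the maximum domain of attraction of some
extreme value distribution is not open: for every `F ∈ D` and every `ε > 0` there exists
`G ∉ D` with Lévy distance `d(F, G) < ε`. -/
theorem not_isOpen_domain_of_attraction :
    ¬ IsOpen {μ : ProbabilityMeasure ℝ | ∃ γ : ℝ, MemDomAttr γ μ} ∧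
      ∀ μ : ProbabilityMeasure ℝ, (∃ γ : ℝ, MemDomAttr γ μ) →
        ∀ ε > (0 : ℝ), ∃ ν : ProbabilityMeasure ℝ,
          levyDist μ ν < ε ∧ ¬ (∃ γ : ℝ, MemDomAttr γ ν) := by
  constructor
  · intro hopen
    have hnear := (tendsto_truncAt_atTop expLaw).eventually
      (hopen.mem_nhds ⟨0, memDomAttr_expLaw⟩)
    obtain ⟨t, γ, hγ⟩ := hnear.exists
    exact not_memDomAttr_truncAt (distrib_expLaw_lt_one t) γ hγ
  · intro μ _ ε hε
    obtain ⟨t, ht, htε⟩ := exists_distrib_lt_one_and_le_distrib_add μ (half_pos hε)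
    exact ⟨truncAt μ t, (levyDist_truncAt_le μ (half_pos hε) htε).trans_lt (half_lt_self hε),
      fun ⟨γ, hγ⟩ => not_memDomAttr_truncAt ht γ hγ⟩
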